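/- Let ψ : [0, r₀] → ℝ be non-negative and non-decreasing with ∫₀^{r₀} ψ(r)/r² dr < ∞, and define Q := {x = (x', x_n) ∈ ℝⁿ : |x'| < r₀, 0 < x_n − ψ(|x'|) < r₀}. Then for every constant K₀ > 0 there exists R₀ with 0 < R₀ ≤ r₀ such that the truncated cone V₀ := {x = (x', x_n) : |x| < R₀, x_n > K₀|x'|} is contained in Q. -/

import Mathlib

open MeasureTheory

/-- If `∫₀^{r₀} ψ(r)/r² dr < ∞`, then for any `K₀ > 0` there is `0 < R₀ ≤ r₀` such that the
truncated cone `V₀ = {|x| < R₀, x_n > K₀|x'|}` is contained in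
`Q = {|x'| < r₀, 0 < x_n − ψ(|x'|) < r₀}`. -/
theorem stmt4 (m : ℕ) (r₀ : ℝ) (hr₀ : 0 < r₀) (ψ : ℝ → ℝ)
    (hnn : ∀ r ∈ Set.Icc 0 r₀, 0 ≤ ψ r) (hmono : MonotoneOn ψ (Set.Icc 0 r₀))
    (hint : (∫⁻ r in Set.Ioc 0 r₀, ENNReal.ofReal (ψ r / r ^ 2)) < ⊤)
    (K₀ : ℝ) (hK₀ : 0 < K₀) :
    ∃ R₀ : ℝ, 0 < R₀ ∧ R₀ ≤ r₀ ∧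
      {p : EuclideanSpace ℝ (Fin m) × ℝ |
          Real.sqrt (‖p.1‖ ^ 2 + p.2 ^ 2) < R₀ ∧ K₀ * ‖p.1‖ < p.2} ⊆
        {p : EuclideanSpace ℝ (Fin m) × ℝ |
          ‖p.1‖ < r₀ ∧ 0 < p.2 - ψ ‖p.1‖ ∧ p.2 - ψ ‖p.1‖ < r₀} := by
  -- absolute continuity of the integral
  obtain ⟨δ, hδ0, hδ⟩ := exists_pos_setLIntegral_lt_of_measure_lt
    (μ := volume.restrict (Set.Ioc 0 r₀)) (f := fun r => ENNReal.ofReal (ψ r / r ^ 2))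
    (by simpa using hint.ne) (ε := ENNReal.ofReal (K₀ / 4))
    (ENNReal.ofReal_pos.2 (by positivity)).ne'
  -- pick a real `d` with `0 < ofReal d < δ`
  obtain ⟨d, hd0', hd1, hd2⟩ := ENNReal.lt_iff_exists_real_btwn.mp hδ0
  have hd0 : 0 < d := by
    by_contra h
    push_neg at h
    simp [ENNReal.ofReal_eq_zero.2 h] at hd1
  set R₀ : ℝ := min (d / 2) (r₀ / 2) with hR₀def
  have hR₀0 : 0 < R₀ := lt_min (by linarith) (by linarith)
  have hR₀r₀ : R₀ ≤ r₀ := le_trans (min_le_right _ _) (by linarith)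
  -- key: ψ r < K₀ r for 0 < r < R₀
  have key : ∀ r : ℝ, 0 < r → r < R₀ → ψ r < K₀ * r := by
    intro r hr hrR
    have h2r : 2 * r ≤ r₀ := by
      have := hrR.trans_le (min_le_right _ _)
      linarith
    have hsub : Set.Ioc r (2 * r) ⊆ Set.Ioc 0 r₀ :=
      fun t ht => ⟨hr.trans ht.1, ht.2.trans h2r⟩
    have hmeas : (volume.restrict (Set.Ioc 0 r₀)) (Set.Ioc r (2 * r)) < δ := by
      rw [Measure.restrict_apply measurableSet_Ioc, Set.inter_eq_left.mpr hsub,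
        Real.volume_Ioc]
      calc ENNReal.ofReal (2 * r - r) < ENNReal.ofReal d := by
            apply ENNReal.ofReal_lt_ofReal_iff hd0 |>.2
            have := hrR.trans_le (min_le_left _ _)
            linarith
        _ < δ := hd2
    have hlt := hδ _ hmeas
    rw [Measure.restrict_restrict measurableSet_Ioc, Set.inter_eq_left.mpr hsub] at hlt
    -- lower bound on the integral over `Ioc r (2r)`
    have hψr : 0 ≤ ψ r := hnn r ⟨hr.le, by linarith⟩
    have hlb : ENNReal.ofReal (ψ r / (4 * r)) ≤
        ∫⁻ t in Set.Ioc r (2 * r), ENNReal.ofReal (ψ t / t ^ 2) := by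
      have : ∫⁻ _ in Set.Ioc r (2 * r), ENNReal.ofReal (ψ r / (4 * r ^ 2)) ≤
          ∫⁻ t in Set.Ioc r (2 * r), ENNReal.ofReal (ψ t / t ^ 2) := by
        apply setLIntegral_mono' measurableSet_Ioc
        intro t ht
        apply ENNReal.ofReal_le_ofReal
        have htpos : 0 < t := hr.trans ht.1
        have hψt : ψ r ≤ ψ t :=
          hmono ⟨hr.le, by linarith⟩ ⟨htpos.le, ht.2.trans h2r⟩ ht.1.le
        have ht2 : t ^ 2 ≤ 4 * r ^ 2 := by nlinarith [ht.2]
        exact div_le_div₀ (hψr.trans hψt) hψt (by positivity) ht2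
      calc ENNReal.ofReal (ψ r / (4 * r))
          = ENNReal.ofReal (ψ r / (4 * r ^ 2)) * ENNReal.ofReal (2 * r - r) := by
            rw [← ENNReal.ofReal_mul (by positivity)]
            congr 1
            field_simp
            ring
        _ = ∫⁻ _ in Set.Ioc r (2 * r), ENNReal.ofReal (ψ r / (4 * r ^ 2)) := by
            rw [setLIntegral_const, Real.volume_Ioc]
        _ ≤ _ := this
    have hfin : ψ r / (4 * r) < K₀ / 4 := by
      have := hlb.trans_lt hlt
      exact (ENNReal.ofReal_lt_ofReal_iff (by positivity)).mp this
    rw [div_lt_div_iff₀ (by positivity) (by norm_num)] at hfin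
    nlinarith
  refine ⟨R₀, hR₀0, hR₀r₀, ?_⟩
  rintro ⟨x, y⟩ ⟨h1, h2⟩
  simp only [Set.mem_setOf_eq] at *
  have hx0 : (0:ℝ) ≤ ‖x‖ := norm_nonneg _
  have hy0 : 0 < y := lt_of_le_of_lt (by positivity) h2
  have hxle : ‖x‖ ≤ Real.sqrt (‖x‖ ^ 2 + y ^ 2) :=
    Real.le_sqrt_of_sq_le (by nlinarith)
  have hyle : y ≤ Real.sqrt (‖x‖ ^ 2 + y ^ 2) :=
    Real.le_sqrt_of_sq_le (by nlinarith)
  have hxR : ‖x‖ < R₀ := hxle.trans_lt h1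
  have hyR : y < R₀ := hyle.trans_lt h1
  have hxr₀ : ‖x‖ < r₀ := hxR.trans_le hR₀r₀
  have hψlt : ψ ‖x‖ < y := by
    rcases eq_or_lt_of_le hx0 with h0 | h0
    · -- ‖x‖ = 0 case
      set r := min (R₀ / 2) (y / (2 * K₀)) with hr
      have hrpos : 0 < r := lt_min (by linarith) (by positivity)
      have hrR : r < R₀ := lt_of_le_of_lt (min_le_left _ _) (by linarith)
      have h1 : ψ ‖x‖ ≤ ψ r := by
        rw [← h0]
        exact hmono ⟨le_rfl, hr₀.le⟩ ⟨hrpos.le, hrR.le.trans hR₀r₀⟩ hrpos.le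
      have h2 : ψ r < K₀ * r := key r hrpos hrR
      have h3 : K₀ * r ≤ K₀ * (y / (2 * K₀)) :=
        mul_le_mul_of_nonneg_left (min_le_right _ _) hK₀.le
      have h4 : K₀ * (y / (2 * K₀)) = y / 2 := by field_simp
      linarith
    · exact lt_of_lt_of_le (key ‖x‖ h0 hxR) (by nlinarith)
  have hψnn : 0 ≤ ψ ‖x‖ := hnn _ ⟨hx0, hxr₀.le⟩
  refine ⟨hxr₀, by linarith, ?_⟩
  have : y < r₀ := hyR.trans_le hR₀r₀
  linarith
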